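/- Let A = ⨁_{i,j∈I} A_{ij} be a generalized matrix ring with gm unit {e_i}_{i∈I} (e_i acts as left identity on A_{ij} and right identity on A_{ji}). An A-module M satisfies AM = M if and only if M is locally unitary: for every x ∈ M there exists u ∈ A with u·x = x. -/
import Mathlib


/-- Let `A` be a (possibly non-unital) ring with a generalized matrix unit `{e_i}` and let
`M` be an `A`-module.  Then `AM = M` iff `M` is locally unitary. -/
theorem stmt_15 {A : Type*} {ι : Type*} [NonUnitalRing A]
    (e : ι → A) (hne : ∀ i, e i ≠ 0)
    (hidem : ∀ i, e i * e i = e i) (horth : ∀ i j, i ≠ j → e i * e j = 0)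
    (hcomp : ∀ x : A, ∃ F : Finset ι,
      (∑ i ∈ F, e i) * x = x ∧ x * (∑ i ∈ F, e i) = x)
    {M : Type*} [AddCommGroup M] [SMul A M]
    (hsmul_add : ∀ (a : A) (x y : M), a • (x + y) = a • x + a • y)
    (hadd_smul : ∀ (a b : A) (x : M), (a + b) • x = a • x + b • x)
    (hmul_smul : ∀ (a b : A) (x : M), (a * b) • x = a • (b • x)) :
    AddSubgroup.closure {z : M | ∃ (a : A) (x : M), z = a • x} = ⊤ ↔
      ∀ x : M, ∃ u : A, u • x = x := by
  classical
  have zero_smul' : ∀ x : M, (0 : A) • x = 0 := by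
    intro x
    have h := hadd_smul 0 0 x
    rw [add_zero] at h
    exact (add_eq_left.mp h.symm)
  have smul_neg' : ∀ (a : A) (x : M), a • (-x) = -(a • x) := by
    intro a x
    have h0 : a • (0 : M) = 0 := by
      have h := hsmul_add a 0 0
      rw [add_zero] at h
      exact add_eq_left.mp h.symm
    have h := hsmul_add a x (-x)
    rw [add_neg_cancel, h0] at h
    exact (eq_neg_of_add_eq_zero_right h.symm)
  have key : ∀ F G : Finset ι, F ⊆ G →
      (∑ i ∈ G, e i) * (∑ j ∈ F, e j) = ∑ j ∈ F, e j := by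
    intro F G hFG
    rw [Finset.sum_mul_sum]
    rw [Finset.sum_comm]
    refine Finset.sum_congr rfl ?_
    intro j hj
    rw [Finset.sum_eq_single j]
    · exact hidem j
    · intro i _ hij
      exact horth i j hij
    · intro h
      exact absurd (hFG hj) h
  constructor
  · intro h x
    have hx : x ∈ AddSubgroup.closure {z : M | ∃ (a : A) (x : M), z = a • x} := by
      rw [h]; exact AddSubgroup.mem_top x
    refine AddSubgroup.closure_induction ?_ ?_ ?_ ?_ hx
    · rintro z ⟨a, y, rfl⟩
      obtain ⟨F, hF1, _⟩ := hcomp a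
      exact ⟨∑ i ∈ F, e i, by rw [← hmul_smul, hF1]⟩
    · exact ⟨0, zero_smul' 0⟩
    · rintro y z _ _ ⟨u, hu⟩ ⟨v, hv⟩
      obtain ⟨F, hF1, _⟩ := hcomp u
      obtain ⟨G, hG1, _⟩ := hcomp v
      refine ⟨∑ i ∈ F ∪ G, e i, ?_⟩
      have hwu : (∑ i ∈ F ∪ G, e i) * u = u := by
        conv_lhs => rw [← hF1, ← mul_assoc, key F (F ∪ G) Finset.subset_union_left]
        exact hF1
      have hwv : (∑ i ∈ F ∪ G, e i) * v = v := by
        conv_lhs => rw [← hG1, ← mul_assoc, key G (F ∪ G) Finset.subset_union_right]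
        exact hG1
      rw [hsmul_add]
      have hy : (∑ i ∈ F ∪ G, e i) • y = y := by
        conv_lhs => rw [← hu, ← hmul_smul, hwu]
        exact hu
      have hz : (∑ i ∈ F ∪ G, e i) • z = z := by
        conv_lhs => rw [← hv, ← hmul_smul, hwv]
        exact hv
      rw [hy, hz]
    · rintro y _ ⟨u, hu⟩
      exact ⟨u, by rw [smul_neg', hu]⟩
  · intro h
    rw [eq_top_iff]
    intro x _
    obtain ⟨u, hu⟩ := h x
    exact AddSubgroup.subset_closure ⟨u, x, hu.symm⟩
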